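/- arXiv:1201.3286 — 2 statements merged into one kernel-verified Lean document; each statement's English description precedes it below -/
import Mathlib

section
/- If X_1, X_2, X_3 are bounded operators on a Hilbert space such that ‖z_1 X_1 + z_2 X_2 + z_3 X_3‖ ≤ 1 for all z in the closed unit polydisk (equivalently, for all z on the 3-torus), then I - X_1*X_1 - X_2*X_2 - X_3*X_3 is positive semidefinite. -/
open ContinuousLinearMap RCLike
open scoped ComplexInnerProductSpace

lemma key_parallelogram {H : Type*} [NormedAddCommGroup H] [InnerProductSpace ℂ H]
    (u v w : H) :
    ‖u + v + w‖ ^ 2 + ‖u - v - w‖ ^ 2 + ‖-u + v - w‖ ^ 2 + ‖-u - v + w‖ ^ 2 =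
      4 * (‖u‖ ^ 2 + ‖v‖ ^ 2 + ‖w‖ ^ 2) := by
  have h : ∀ y : H, (‖y‖ : ℝ) ^ 2 = re (⟪y, y⟫) := fun y =>
    (inner_self_eq_norm_sq (𝕜 := ℂ) y).symm
  rw [h, h, h, h, h, h, h]
  rw [← map_add, ← map_add, ← map_add]
  have : ⟪u + v + w, u + v + w⟫ + ⟪u - v - w, u - v - w⟫ +
      ⟪-u + v - w, -u + v - w⟫ + ⟪-u - v + w, -u - v + w⟫ =
      4 * (⟪u, u⟫ + ⟪v, v⟫ + ⟪w, w⟫) := by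
    simp only [inner_add_left, inner_add_right, inner_sub_left, inner_sub_right,
      inner_neg_left, inner_neg_right]
    ring
  rw [this]
  simp [map_add]

theorem stmt_0 {H : Type*} [NormedAddCommGroup H] [InnerProductSpace ℂ H]
    [CompleteSpace H] (X : Fin 3 → H →L[ℂ] H)
    (hX : ∀ z : Fin 3 → ℂ, (∀ k, ‖z k‖ ≤ 1) → ‖∑ k, z k • X k‖ ≤ 1) :
    (1 - ∑ k, ContinuousLinearMap.adjoint (X k) ∘L X k).IsPositive := by
  constructor
  · rw [← ContinuousLinearMap.isSelfAdjoint_iff_isSymmetric]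
    simp only [IsSelfAdjoint, star_sub, star_one, star_sum,
      ContinuousLinearMap.star_eq_adjoint, adjoint_comp, adjoint_adjoint]
  · intro x
    -- the 4 sign vectors
    have bound : ∀ z : Fin 3 → ℂ, (∀ k, ‖z k‖ ≤ 1) →
        ‖z 0 • X 0 x + z 1 • X 1 x + z 2 • X 2 x‖ ≤ ‖x‖ := by
      intro z hz
      have h1 := hX z hz
      have : z 0 • X 0 x + z 1 • X 1 x + z 2 • X 2 x = (∑ k, z k • X k) x := by
        simp [Fin.sum_univ_three]
      rw [this]
      calc ‖(∑ k, z k • X k) x‖ ≤ ‖∑ k, z k • X k‖ * ‖x‖ := le_opNorm _ _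
        _ ≤ 1 * ‖x‖ := by
            exact mul_le_mul_of_nonneg_right h1 (norm_nonneg _)
        _ = ‖x‖ := one_mul _
    set u := X 0 x; set v := X 1 x; set w := X 2 x
    have hz1 : ‖u + v + w‖ ≤ ‖x‖ := by
      have := bound (fun _ => 1) (fun k => by norm_num)
      simpa using this
    have hz2 : ‖u - v - w‖ ≤ ‖x‖ := by
      have := bound ![1, -1, -1] (fun k => by fin_cases k <;> norm_num)
      simpa [sub_eq_add_neg] using this
    have hz3 : ‖-u + v - w‖ ≤ ‖x‖ := by
      have := bound ![-1, 1, -1] (fun k => by fin_cases k <;> norm_num)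
      simpa [sub_eq_add_neg] using this
    have hz4 : ‖-u - v + w‖ ≤ ‖x‖ := by
      have := bound ![-1, -1, 1] (fun k => by fin_cases k <;> norm_num)
      simpa [sub_eq_add_neg] using this
    have key := key_parallelogram u v w
    have hsum : ‖u‖ ^ 2 + ‖v‖ ^ 2 + ‖w‖ ^ 2 ≤ ‖x‖ ^ 2 := by
      nlinarith [norm_nonneg (u + v + w), norm_nonneg (u - v - w),
        norm_nonneg (-u + v - w), norm_nonneg (-u - v + w), norm_nonneg x,
        sq_nonneg (‖u + v + w‖ - ‖x‖)]
    have expand : (1 - ∑ k, ContinuousLinearMap.adjoint (X k) ∘L X k).reApplyInnerSelf x =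
        ‖x‖ ^ 2 - (‖u‖ ^ 2 + ‖v‖ ^ 2 + ‖w‖ ^ 2) := by
      simp only [reApplyInnerSelf, ContinuousLinearMap.sub_apply, one_apply,
        ContinuousLinearMap.sum_apply, comp_apply, inner_sub_left, inner_sum,
        map_sub, map_sum]
      rw [Fin.sum_univ_three]
      rw [inner_add_left, inner_add_left, adjoint_inner_left, adjoint_inner_left,
        adjoint_inner_left, ContinuousLinearMap.one_apply, inner_self_eq_norm_sq (𝕜 := ℂ) x, map_add, map_add,
        inner_self_eq_norm_sq (𝕜 := ℂ) (X 0 x), inner_self_eq_norm_sq (𝕜 := ℂ) (X 1 x),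
        inner_self_eq_norm_sq (𝕜 := ℂ) (X 2 x)]
    rw [expand]
    linarith
end

section
/- Let F = [[W, X],[Y, Z]] be a 2×2 block operator acting on H ⊕ K with ‖F‖ < 1. Then the linear fractional expression Z + Y(I - W)^{-1} X is a well-defined contraction (its operator norm is at most 1). -/
open ContinuousLinearMap

/-- The 2×2 block operator `[[W, X],[Y, Z]]` acting on the Hilbert space
direct sum `H ⊕₂ K` (i.e. `WithLp 2 (H × K)`). -/
noncomputable def blockOp2 {H K : Type*} [NormedAddCommGroup H] [InnerProductSpace ℂ H]
    [NormedAddCommGroup K] [InnerProductSpace ℂ K]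
    (W : H →L[ℂ] H) (X : K →L[ℂ] H) (Y : H →L[ℂ] K) (Z : K →L[ℂ] K) :
    WithLp 2 (H × K) →L[ℂ] WithLp 2 (H × K) :=
  ((WithLp.prodContinuousLinearEquiv 2 ℂ H K).symm : H × K →L[ℂ] WithLp 2 (H × K)) ∘L
    (((W ∘L fst ℂ H K) + (X ∘L snd ℂ H K)).prod ((Y ∘L fst ℂ H K) + (Z ∘L snd ℂ H K))) ∘L
    ((WithLp.prodContinuousLinearEquiv 2 ℂ H K) : WithLp 2 (H × K) →L[ℂ] H × K)

lemma blockOp2_apply {H K : Type*} [NormedAddCommGroup H] [InnerProductSpace ℂ H]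
    [NormedAddCommGroup K] [InnerProductSpace ℂ K]
    (W : H →L[ℂ] H) (X : K →L[ℂ] H) (Y : H →L[ℂ] K) (Z : K →L[ℂ] K) (a : H) (b : K) :
    blockOp2 W X Y Z ((WithLp.prodContinuousLinearEquiv 2 ℂ H K).symm (a, b)) =
      (WithLp.prodContinuousLinearEquiv 2 ℂ H K).symm (W a + X b, Y a + Z b) := by
  simp [blockOp2]

lemma norm_symm_sq {H K : Type*} [NormedAddCommGroup H] [InnerProductSpace ℂ H]
    [NormedAddCommGroup K] [InnerProductSpace ℂ K] (a : H) (b : K) :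
    ‖(WithLp.prodContinuousLinearEquiv 2 ℂ H K).symm (a, b)‖ ^ 2 = ‖a‖ ^ 2 + ‖b‖ ^ 2 := by
  rw [WithLp.prod_norm_sq_eq_of_L2]
  rfl

theorem stmt_2 {H K : Type*} [NormedAddCommGroup H] [InnerProductSpace ℂ H] [CompleteSpace H]
    [NormedAddCommGroup K] [InnerProductSpace ℂ K] [CompleteSpace K]
    (W : H →L[ℂ] H) (X : K →L[ℂ] H) (Y : H →L[ℂ] K) (Z : K →L[ℂ] K)
    (hF : ‖blockOp2 W X Y Z‖ < 1) :
    IsUnit (1 - W) ∧ ‖Z + Y ∘L Ring.inverse (1 - W) ∘L X‖ ≤ 1 := by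
  set F := blockOp2 W X Y Z
  have hF0 : 0 ≤ ‖F‖ := norm_nonneg _
  -- ‖W‖ < 1
  have hW : ‖W‖ < 1 := by
    refine lt_of_le_of_lt (opNorm_le_bound _ hF0 fun h => ?_) hF
    have h1 := blockOp2_apply W X Y Z h 0
    have h2 : ‖F ((WithLp.prodContinuousLinearEquiv 2 ℂ H K).symm (h, 0))‖ ≤
        ‖F‖ * ‖(WithLp.prodContinuousLinearEquiv 2 ℂ H K).symm (h, 0)‖ := le_opNorm _ _
    rw [h1] at h2
    have e1 : ‖(WithLp.prodContinuousLinearEquiv 2 ℂ H K).symm (h, 0)‖ = ‖h‖ := by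
      have hn := norm_symm_sq (H := H) (K := K) h 0
      rw [norm_zero] at hn
      nlinarith [norm_nonneg ((WithLp.prodContinuousLinearEquiv 2 ℂ H K).symm (h, (0:K))),
        norm_nonneg h]
    have e2 : ‖W h‖ ≤ ‖(WithLp.prodContinuousLinearEquiv 2 ℂ H K).symm
        (W h + X 0, Y h + Z 0)‖ := by
      have hs := norm_symm_sq (W h + X 0) (Y h + Z 0)
      simp only [map_zero, add_zero] at hs ⊢
      nlinarith [norm_nonneg ((WithLp.prodContinuousLinearEquiv 2 ℂ H K).symm (W h, Y h)),
        norm_nonneg (W h), sq_nonneg ‖Y h‖]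
    calc ‖W h‖ ≤ _ := e2
      _ ≤ ‖F‖ * ‖h‖ := by rw [← e1]; exact h2
  have hu : IsUnit (1 - W) := by
    have := (Units.oneSub W hW).isUnit
    simpa using this
  refine ⟨hu, ?_⟩
  refine opNorm_le_bound _ zero_le_one fun k => ?_
  set R := Ring.inverse (1 - W)
  set h := R (X k) with hh
  have hfix : W h + X k = h := by
    have : (1 - W) ∘L R = 1 := by
      have := Ring.mul_inverse_cancel _ hu
      exact this
    have h1 : ((1 - W) ∘L R) (X k) = X k := by rw [this]; rfl
    simp only [comp_apply, sub_apply, one_apply] at h1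
    have h2 : h - W h = X k := h1
    rw [← h2]; abel
  have hS : (Z + Y ∘L R ∘L X) k = Y h + Z k := by
    simp [hh, add_comm]
  have happ := blockOp2_apply W X Y Z h k
  rw [hfix] at happ
  have hle : ‖F ((WithLp.prodContinuousLinearEquiv 2 ℂ H K).symm (h, k))‖ ≤
      ‖F‖ * ‖(WithLp.prodContinuousLinearEquiv 2 ℂ H K).symm (h, k)‖ := le_opNorm _ _
  rw [happ] at hle
  have h1 := norm_symm_sq h (Y h + Z k)
  have h2 := norm_symm_sq h k
  have hsq : ‖h‖ ^ 2 + ‖Y h + Z k‖ ^ 2 ≤ ‖F‖ ^ 2 * (‖h‖ ^ 2 + ‖k‖ ^ 2) := by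
    nlinarith [norm_nonneg ((WithLp.prodContinuousLinearEquiv 2 ℂ H K).symm (h, Y h + Z k)),
      norm_nonneg ((WithLp.prodContinuousLinearEquiv 2 ℂ H K).symm (h, k))]
  rw [hS]
  have hF2 : ‖F‖ ^ 2 ≤ 1 := by nlinarith
  have hsum : (0:ℝ) ≤ ‖h‖ ^ 2 + ‖k‖ ^ 2 := by positivity
  have hk2 : ‖Y h + Z k‖ ^ 2 ≤ ‖k‖ ^ 2 := by nlinarith [sq_nonneg ‖h‖]
  rw [one_mul]
  nlinarith [norm_nonneg (Y h + Z k), norm_nonneg k]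
end
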